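/- arXiv:1512.00099 — 5 statements merged into one kernel-verified Lean document; each statement's English description precedes it below -/
import Mathlib

section
/- Let L ≥ 3, v : {1,…,L} → ℝ, and let H(k) be the associated Floquet matrix. Suppose J ⊆ ℝ is an open interval and E : J → ℝ, u : J → ℂ^L are differentiable functions such that for every k ∈ J one has ‖u(k)‖ = 1 (Euclidean norm) and H(k) u(k) = E(k) u(k). Then |E′(k)| ≤ 2 for every k ∈ J. -/
/-!
By the Feynman–Hellmann formula, `E'(k) = ⟨u(k), H'(k) u(k)⟩`. In the gauge
`u_j ↦ e^{-ikj} u_j` the boundary phase `e^{ikL}` of `H(k)` is spread evenly over the `L` bonds: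
`H(k)` becomes `diag v - e^{ik} P - e^{-ik} Pᵀ`, where `P` is the matrix of the cyclic shift.
The derivative of the gauged matrix is `i (e^{-ik} Pᵀ - e^{ik} P)`, and for a unit vector `x`
Cauchy–Schwarz gives `|⟨x, P x⟩| ≤ 1` and `|⟨x, Pᵀ x⟩| ≤ 1`, whence `|E'(k)| ≤ 2`.
-/

/-- The Floquet matrix `H(k)`: `L×L` complex matrix with `v` on the diagonal, `-1` on the
off-diagonals, and corner entries `-e^{∓ikL}` (indices `1,…,L` realized as `Fin L`). -/
noncomputable def floquetH (L : ℕ) (v : Fin L → ℝ) (k : ℝ) : Matrix (Fin L) (Fin L) ℂ :=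
  Matrix.of fun i j =>
    if i = j then (v i : ℂ)
    else if (i : ℕ) + 1 = (j : ℕ) then -1
    else if (j : ℕ) + 1 = (i : ℕ) then -1
    else if (i : ℕ) = 0 ∧ (j : ℕ) = L - 1 then -Complex.exp (-(Complex.I * k * L))
    else if (i : ℕ) = L - 1 ∧ (j : ℕ) = 0 then -Complex.exp (Complex.I * k * L)
    else 0

open Matrix Complex Filter Topology

section Calculus

variable {n : Type*} [Fintype n] {𝕜 A : Type*} [NontriviallyNormedField 𝕜] [NormedCommRing A]
  [NormedAlgebra 𝕜 A] {x : 𝕜}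

theorem HasDerivAt.dotProduct {u v : 𝕜 → n → A} {u' v' : n → A}
    (hu : HasDerivAt u u' x) (hv : HasDerivAt v v' x) :
    HasDerivAt (fun t => u t ⬝ᵥ v t) (u' ⬝ᵥ v x + u x ⬝ᵥ v') x := by
  show HasDerivAt _ (∑ i, u' i * v x i + ∑ i, u x i * v' i) x
  rw [← Finset.sum_add_distrib]
  exact HasDerivAt.fun_sum fun i _ => (hasDerivAt_pi.1 hu i).mul (hasDerivAt_pi.1 hv i)

theorem HasDerivAt.mulVec {M : 𝕜 → Matrix n n A} {M' : Matrix n n A} {u : 𝕜 → n → A}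
    {u' : n → A} (hM : ∀ i j, HasDerivAt (fun t => M t i j) (M' i j) x)
    (hu : HasDerivAt u u' x) :
    HasDerivAt (fun t => M t *ᵥ u t) (M' *ᵥ u x + M x *ᵥ u') x :=
  hasDerivAt_pi.2 fun i => (hasDerivAt_pi.2 (hM i)).dotProduct hu

end Calculus

theorem hasDerivAt_exp_mul_ofReal (c : ℂ) (k : ℝ) :
    HasDerivAt (fun t : ℝ => exp (c * t)) (c * exp (c * k)) k := by
  simpa [mul_comm] using ((hasDerivAt_id (k : ℂ)).const_mul c).cexp.comp_ofReal

theorem feynman_hellmann {n : Type*} [Fintype n] {H : ℝ → Matrix n n ℂ} {H' : Matrix n n ℂ}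
    {u : ℝ → n → ℂ} {u' : n → ℂ} {E : ℝ → ℝ} {E' k : ℝ}
    (hH : ∀ i j, HasDerivAt (fun t => H t i j) (H' i j) k) (hHerm : (H k).IsHermitian)
    (hu : HasDerivAt u u' k) (hE : HasDerivAt E E' k)
    (hnorm : ∀ᶠ t in 𝓝 k, star (u t) ⬝ᵥ u t = 1)
    (heig : ∀ᶠ t in 𝓝 k, H t *ᵥ u t = (E t : ℂ) • u t) :
    (E' : ℂ) = star (u k) ⬝ᵥ (H' *ᵥ u k) := by
  have hu_star : HasDerivAt (fun t => star (u t)) (star u') k := hu.star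
  have hnorm' : star u' ⬝ᵥ u k + star (u k) ⬝ᵥ u' = 0 :=
    (hu_star.dotProduct hu).unique ((hasDerivAt_const k 1).congr_of_eventuallyEq hnorm)
  have hquad : ∀ᶠ t in 𝓝 k, star (u t) ⬝ᵥ (H t *ᵥ u t) = E t := by
    filter_upwards [hnorm, heig] with t hn he
    rw [he, dotProduct_smul, hn, smul_eq_mul, mul_one]
  have hderiv := (hu_star.dotProduct (HasDerivAt.mulVec hH hu)).unique
    (hE.ofReal_comp.congr_of_eventuallyEq hquad)
  have hEk : H k *ᵥ u k = (E k : ℂ) • u k := heig.self_of_nhds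
  have hadj : star (u k) ⬝ᵥ (H k *ᵥ u') = (E k : ℂ) * (star (u k) ⬝ᵥ u') := by
    rw [dotProduct_mulVec, ← hHerm.eq, ← star_mulVec, hEk, star_smul, Complex.star_def,
      Complex.conj_ofReal, smul_dotProduct, smul_eq_mul]
  rw [← hderiv, dotProduct_add, hEk, dotProduct_smul, hadj, smul_eq_mul]
  linear_combination (E k : ℂ) * hnorm'

theorem norm_star_dotProduct_permMatrix_mulVec_le {n : Type*} [Fintype n] [DecidableEq n]
    (x : n → ℂ) (σ : Equiv.Perm n) : ‖star x ⬝ᵥ (σ.permMatrix ℂ *ᵥ x)‖ ≤ ‖star x ⬝ᵥ x‖ := by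
  have hself : star x ⬝ᵥ x = ((∑ i, ‖x i‖ ^ 2 : ℝ) : ℂ) := by
    push_cast
    exact Finset.sum_congr rfl fun i _ => conj_mul' (x i)
  rw [permMatrix_mulVec, hself, norm_real, Real.norm_of_nonneg (by positivity)]
  calc ‖star x ⬝ᵥ (x ∘ σ)‖ ≤ ∑ i, ‖x i‖ * ‖x (σ i)‖ := by
        refine (norm_sum_le _ _).trans (le_of_eq (Finset.sum_congr rfl fun i _ => ?_))
        simp
    _ ≤ ∑ i, (‖x i‖ ^ 2 + ‖x (σ i)‖ ^ 2) / 2 :=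
        Finset.sum_le_sum fun i _ => by nlinarith [sq_nonneg (‖x i‖ - ‖x (σ i)‖)]
    _ = ∑ i, ‖x i‖ ^ 2 := by
        rw [← Finset.sum_div, Finset.sum_add_distrib, Equiv.sum_comp σ (fun i => ‖x i‖ ^ 2)]
        ring

theorem coe_finRotate_eq_ite {L : ℕ} (i : Fin L) :
    (finRotate L i : ℕ) = if (i : ℕ) + 1 = L then 0 else (i : ℕ) + 1 := by
  cases L with
  | zero => exact i.elim0
  | succ n =>
    rw [coe_finRotate]
    simp only [Fin.ext_iff, Fin.val_last, Nat.add_right_cancel_iff]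

theorem Equiv.Perm.permMatrix_apply {n R : Type*} [DecidableEq n] [Zero R] [One R]
    (σ : Equiv.Perm n) (i j : n) : σ.permMatrix R i j = if σ i = j then 1 else 0 := by
  simp [PEquiv.toMatrix_apply]

theorem exp_I_mul_natCast (k : ℝ) (n : ℕ) : exp (I * k * n) = exp (I * k) ^ n := by
  rw [← Complex.exp_nat_mul]; ring_nf

theorem star_exp_I_mul (k : ℝ) : star (exp (I * k)) = exp (-(I * k)) := by
  rw [Complex.star_def, ← Complex.exp_conj, map_mul, conj_I, conj_ofReal, neg_mul]

noncomputable def gaugedFloquetH (L : ℕ) (v : Fin L → ℝ) (k : ℝ) : Matrix (Fin L) (Fin L) ℂ :=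
  diagonal (fun i => (v i : ℂ)) - exp (I * k) • (finRotate L).permMatrix ℂ
    - exp (-(I * k)) • ((finRotate L).permMatrix ℂ)ᵀ

noncomputable def gaugedFloquetHDeriv (L : ℕ) (k : ℝ) : Matrix (Fin L) (Fin L) ℂ :=
  (I * exp (-(I * k))) • ((finRotate L).permMatrix ℂ)ᵀ
    - (I * exp (I * k)) • (finRotate L).permMatrix ℂ

theorem gaugedFloquetH_isHermitian (L : ℕ) (v : Fin L → ℝ) (k : ℝ) :
    (gaugedFloquetH L v k).IsHermitian := by
  have hdiag : star (fun i => (v i : ℂ)) = fun i => (v i : ℂ) := by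
    ext i; exact conj_ofReal _
  simp only [IsHermitian, gaugedFloquetH, conjTranspose_sub, conjTranspose_smul,
    diagonal_conjTranspose, conjTranspose_permMatrix, transpose_permMatrix, inv_inv, hdiag,
    ← star_exp_I_mul, star_star]
  abel

theorem hasDerivAt_gaugedFloquetH_apply (L : ℕ) (v : Fin L → ℝ) (k : ℝ) (i j : Fin L) :
    HasDerivAt (fun t => gaugedFloquetH L v t i j) (gaugedFloquetHDeriv L k i j) k := by
  have hfun : (fun t => gaugedFloquetH L v t i j) = fun t : ℝ => diagonal (fun i => (v i : ℂ)) i j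
      - exp (I * t) * (finRotate L).permMatrix ℂ i j
      - exp (-I * t) * (finRotate L).permMatrix ℂ j i := by
    funext t
    simp only [gaugedFloquetH, Matrix.sub_apply, Matrix.smul_apply, transpose_apply, smul_eq_mul,
      neg_mul]
  rw [hfun]
  refine (((hasDerivAt_const k _).fun_sub ((hasDerivAt_exp_mul_ofReal I k).mul_const _)).fun_sub
    ((hasDerivAt_exp_mul_ofReal (-I) k).mul_const _)).congr_deriv ?_
  simp only [gaugedFloquetHDeriv, Matrix.sub_apply, Matrix.smul_apply, transpose_apply,
    smul_eq_mul, neg_mul]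
  ring

theorem norm_star_dotProduct_gaugedFloquetHDeriv_mulVec_le (L : ℕ) (k : ℝ) (x : Fin L → ℂ) :
    ‖star x ⬝ᵥ (gaugedFloquetHDeriv L k *ᵥ x)‖ ≤ 2 * ‖star x ⬝ᵥ x‖ := by
  have hphase : ∀ z : ℂ, z.re = 0 → ‖I * exp z‖ = 1 := fun z hz => by
    rw [norm_mul, norm_I, one_mul, norm_exp, hz, Real.exp_zero]
  rw [gaugedFloquetHDeriv, sub_mulVec, smul_mulVec, smul_mulVec, dotProduct_sub, dotProduct_smul,
    dotProduct_smul, transpose_permMatrix]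
  calc _ ≤ ‖(I * exp (-(I * k))) • (star x ⬝ᵥ ((finRotate L)⁻¹.permMatrix ℂ *ᵥ x))‖
        + ‖(I * exp (I * k)) • (star x ⬝ᵥ ((finRotate L).permMatrix ℂ *ᵥ x))‖ := norm_sub_le _ _
    _ = ‖star x ⬝ᵥ ((finRotate L)⁻¹.permMatrix ℂ *ᵥ x)‖
        + ‖star x ⬝ᵥ ((finRotate L).permMatrix ℂ *ᵥ x)‖ := by
      rw [norm_smul, norm_smul, hphase _ (by simp), hphase _ (by simp), one_mul, one_mul]
    _ ≤ 2 * ‖star x ⬝ᵥ x‖ := by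
      linarith [norm_star_dotProduct_permMatrix_mulVec_le x (finRotate L),
        norm_star_dotProduct_permMatrix_mulVec_le x (finRotate L)⁻¹]

theorem gaugedFloquetH_apply {L : ℕ} (hL : 3 ≤ L) (v : Fin L → ℝ) (k : ℝ) (i j : Fin L) :
    gaugedFloquetH L v k i j = exp (-(I * k * i)) * floquetH L v k i j * exp (I * k * j) := by
  -- For `L ≥ 3` the bonds `(i, i + 1)` and `(i + 1, i)` of the cycle are distinct.
  obtain ⟨m, rfl⟩ : ∃ m, L = m + 3 := ⟨L - 3, by omega⟩
  have hz : exp (I * k) ≠ 0 := Complex.exp_ne_zero _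
  have hlast : ∀ a : ℕ, a + 1 = m + 3 ↔ a = m + 2 := by omega
  have hpred : m + 3 - 1 = m + 2 := rfl
  simp only [gaugedFloquetH, floquetH, Matrix.sub_apply, Matrix.smul_apply, diagonal_apply,
    transpose_apply, Equiv.Perm.permMatrix_apply, coe_finRotate_eq_ite, of_apply, Fin.ext_iff,
    smul_eq_mul, Complex.exp_neg, exp_I_mul_natCast]
  obtain ⟨i, hi⟩ := i
  obtain ⟨j, hj⟩ := j
  simp only
  split_ifs <;> first
    | omega
    | (try casesm* _ ∧ _
       simp only [hlast, hpred] at *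
       subst_vars
       field_simp
       ring)

noncomputable def blochGauge {L : ℕ} (k : ℝ) (x : Fin L → ℂ) : Fin L → ℂ :=
  fun j => exp (-(I * k * j)) * x j

theorem star_blochGauge_dotProduct_self {L : ℕ} (k : ℝ) (x : Fin L → ℂ) :
    star (blochGauge k x) ⬝ᵥ blochGauge k x = star x ⬝ᵥ x := by
  refine Finset.sum_congr rfl fun j _ => ?_
  have hphase : ‖exp (-(I * k * j))‖ = 1 := by rw [norm_exp]; simp
  simp only [Pi.star_apply, Complex.star_def, conj_mul', blochGauge, norm_mul, hphase, one_mul]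

theorem hasDerivAt_blochGauge {L : ℕ} {u : ℝ → Fin L → ℂ} {u' : Fin L → ℂ} {k : ℝ}
    (hu : HasDerivAt u u' k) :
    HasDerivAt (fun t => blochGauge t (u t))
      (fun j => exp (-(I * k * j)) * (u' j - I * j * u k j)) k := by
  refine hasDerivAt_pi.2 fun j => ?_
  have hphase : HasDerivAt (fun t : ℝ => exp (-(I * t * j)))
      (-(I * j) * exp (-(I * k * j))) k := by
    convert hasDerivAt_exp_mul_ofReal (-(I * j)) k using 1
    · funext t; ring_nf
    · ring_nf
  exact (hphase.fun_mul (hasDerivAt_pi.1 hu j)).congr_deriv (by ring)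

theorem mulVec_blochGauge {L : ℕ} {M N : Matrix (Fin L) (Fin L) ℂ} {k : ℝ}
    (h : ∀ i j, M i j = exp (-(I * k * i)) * N i j * exp (I * k * j)) (x : Fin L → ℂ) :
    M *ᵥ blochGauge k x = blochGauge k (N *ᵥ x) := by
  ext i
  simp only [mulVec, dotProduct, blochGauge, h, Finset.mul_sum]
  refine Finset.sum_congr rfl fun j _ => ?_
  rw [Complex.exp_neg (I * k * j)]
  field_simp

/-- If `E(k)`, `u(k)` are differentiable on an open interval, `‖u(k)‖ = 1` (Euclidean norm) and
`H(k) u(k) = E(k) u(k)`, then `|E'(k)| ≤ 2` on that interval. -/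
theorem abs_deriv_dispersion_curve_le_two (L : ℕ) (hL : 3 ≤ L) (v : Fin L → ℝ)
    (a b : ℝ) (E : ℝ → ℝ) (u : ℝ → EuclideanSpace ℂ (Fin L))
    (E' : ℝ → ℝ) (u' : ℝ → EuclideanSpace ℂ (Fin L))
    (hE : ∀ k ∈ Set.Ioo a b, HasDerivAt E (E' k) k)
    (hu : ∀ k ∈ Set.Ioo a b, HasDerivAt u (u' k) k)
    (hnorm : ∀ k ∈ Set.Ioo a b, ‖u k‖ = 1)
    (heig : ∀ k ∈ Set.Ioo a b, (floquetH L v k).mulVec (u k) = (E k : ℂ) • (u k)) :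
    ∀ k ∈ Set.Ioo a b, |E' k| ≤ 2 := by
  intro k hk
  have hIoo : Set.Ioo a b ∈ 𝓝 k := isOpen_Ioo.mem_nhds hk
  set ψ : ℝ → Fin L → ℂ := fun t => blochGauge t (u t)
  have hψ_norm : ∀ t ∈ Set.Ioo a b, star (ψ t) ⬝ᵥ ψ t = 1 := fun t ht => by
    rw [star_blochGauge_dotProduct_self, dotProduct_comm, ← EuclideanSpace.inner_eq_star_dotProduct,
      inner_self_eq_norm_sq_to_K, hnorm t ht]
    norm_num
  have hψ_eig : ∀ t ∈ Set.Ioo a b, gaugedFloquetH L v t *ᵥ ψ t = (E t : ℂ) • ψ t := fun t ht => by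
    rw [mulVec_blochGauge (gaugedFloquetH_apply hL v t), heig t ht]
    ext j
    simp only [ψ, blochGauge, Pi.smul_apply, smul_eq_mul]
    ring
  have hψ_deriv := hasDerivAt_blochGauge
    ((PiLp.hasFDerivAt_ofLp 2 (u k)).comp_hasDerivAt k (hu k hk))
  have hFH := feynman_hellmann (hasDerivAt_gaugedFloquetH_apply L v k)
    (gaugedFloquetH_isHermitian L v k) hψ_deriv (hE k hk) (eventually_of_mem hIoo hψ_norm)
    (eventually_of_mem hIoo hψ_eig)
  calc |E' k| = ‖(E' k : ℂ)‖ := (norm_real _).symm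
    _ ≤ 2 * ‖star (ψ k) ⬝ᵥ ψ k‖ := hFH ▸ norm_star_dotProduct_gaugedFloquetHDeriv_mulVec_le L k _
    _ = 2 := by rw [hψ_norm k hk, norm_one, mul_one]
end

section
/- Let T be a real 2×2 matrix, θ ∈ ℝ, and m ∈ ℂ with Im m ≠ 0. If, viewing T as acting on ℂ², one has T (1, m)ᵀ = e^{−iθ} (1, m)ᵀ, then T = (1/Im m) · [[ Im(e^{iθ} m), −sin θ ], [ |m|² sin θ, Im(e^{−iθ} m) ]]. -/
/-!
Since `Im m ≠ 0`, the numbers `1` and `m` form a real basis of `ℂ`. Row `i` of the eigenvector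
equation reads `T i 0 + T i 1 * m = z` with `z = e^{-iθ}` resp. `z = e^{-iθ} m`, so the two real
entries of each row are the coordinates of `z` in that basis, which Cramer's rule gives as
`Im (conj z * m) / Im m` and `Im z / Im m`.
-/

open Complex ComplexConjugate Matrix

theorem Complex.eq_div_im_of_ofReal_add_ofReal_mul_eq {a b : ℝ} {w z : ℂ} (hw : w.im ≠ 0)
    (h : (a : ℂ) + b * w = z) : a = (conj z * w).im / w.im ∧ b = z.im / w.im := by
  subst h
  constructor <;> field_simp <;> simp [mul_im, mul_re]; ring

theorem Complex.conj_exp_neg_ofReal_mul_I (θ : ℝ) : conj (exp (-(θ * I))) = exp (θ * I) := by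
  rw [← exp_conj]; simp

theorem Complex.exp_neg_ofReal_mul_I_im (θ : ℝ) : (exp (-(θ * I))).im = -Real.sin θ := by
  rw [← neg_mul, ← ofReal_neg, exp_ofReal_mul_I_im, Real.sin_neg]

theorem Complex.im_conj_mul_mul (u m : ℂ) : (conj (u * m) * m).im = ‖m‖ ^ 2 * (conj u).im := by
  rw [map_mul, mul_assoc, conj_mul', mul_comm, ← ofReal_pow, im_ofReal_mul]

theorem Matrix.map_ofReal_mulVec_one_cons_apply (T : Matrix (Fin 2) (Fin 2) ℝ) (m : ℂ)
    (i : Fin 2) : (T.map ofReal *ᵥ ![1, m]) i = T i 0 + T i 1 * m := by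
  simp [mulVec, dotProduct, Fin.sum_univ_two]

/-- If a real `2×2` matrix `T`, viewed as acting on `ℂ²`, satisfies
`T (1, m)ᵀ = e^{-iθ} (1, m)ᵀ` with `Im m ≠ 0`, then
`T = (1/Im m) · [[Im(e^{iθ} m), -sin θ], [|m|² sin θ, Im(e^{-iθ} m)]]`. -/
theorem transfer_matrix_eq_of_eigenvector (T : Matrix (Fin 2) (Fin 2) ℝ) (θ : ℝ) (m : ℂ)
    (hm : m.im ≠ 0)
    (h : (T.map Complex.ofReal).mulVec ![1, m] = Complex.exp (-(θ * Complex.I)) • ![1, m]) :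
    T = (1 / m.im) •
      !![(Complex.exp (θ * Complex.I) * m).im, -Real.sin θ;
         ‖m‖ ^ 2 * Real.sin θ, (Complex.exp (-(θ * Complex.I)) * m).im] := by
  have row0 : (T 0 0 : ℂ) + T 0 1 * m = exp (-(θ * I)) := by
    simpa [map_ofReal_mulVec_one_cons_apply] using congrFun h 0
  have row1 : (T 1 0 : ℂ) + T 1 1 * m = exp (-(θ * I)) * m := by
    simpa [map_ofReal_mulVec_one_cons_apply] using congrFun h 1
  obtain ⟨h00, h01⟩ := eq_div_im_of_ofReal_add_ofReal_mul_eq hm row0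
  obtain ⟨h10, h11⟩ := eq_div_im_of_ofReal_add_ofReal_mul_eq hm row1
  ext i j
  fin_cases i <;> fin_cases j <;>
    simp only [Fin.zero_eta, Fin.mk_one, Fin.isValue, Matrix.smul_apply, of_apply, cons_val',
      cons_val_zero, cons_val_one, cons_val_fin_one, smul_eq_mul, one_div_mul_eq_div]
  · rw [h00, conj_exp_neg_ofReal_mul_I]
  · rw [h01, exp_neg_ofReal_mul_I_im]
  · rw [h10, im_conj_mul_mul, conj_exp_neg_ofReal_mul_I, exp_ofReal_mul_I_im]
  · rw [h11]
end

section
/- Let T be a real 2×2 matrix, θ ∈ ℝ, and m ∈ ℂ with Im m > 0. If, viewing T as acting on ℂ², one has T (1, m)ᵀ = e^{−iθ} (1, m)ᵀ, then ‖T‖ ≥ (|sin θ| / 2) · (1 + |m|²) / Im m, where ‖·‖ is the operator norm induced by the Euclidean norm on ℝ². -/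
open scoped Matrix.Norms.L2Operator

/-!
Write `λ = e^{-iθ}`. The imaginary part of the first row of `T (1, m)ᵀ = λ (1, m)ᵀ` gives
`T₀₁ Im m = -sin θ`. Eliminating `λ` shows that `m` is a nonreal root of the real quadratic
`T₀₁ z² + (T₀₀ - T₁₁) z - T₁₀`, so by Vieta `T₁₀ = -T₀₁ |m|²`. Since the operator norm dominates
every entry, `‖T‖ ≥ (|T₀₁| + |T₁₀|) / 2 = |sin θ| (1 + |m|²) / (2 Im m)`.
-/

namespace Matrix

theorem norm_entry_le_l2_opNorm {𝕜 m n : Type*} [RCLike 𝕜] [Fintype m] [Fintype n]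
    [DecidableEq n] (A : Matrix m n 𝕜) (i : m) (j : n) : ‖A i j‖ ≤ ‖A‖ := by
  have hcol := A.l2_opNorm_mulVec (PiLp.single 2 j 1)
  rw [PiLp.norm_single, norm_one, mul_one] at hcol
  refine le_trans ?_ hcol
  simpa [mulVec_single] using
    PiLp.norm_apply_le ((EuclideanSpace.equiv m 𝕜).symm (A.mulVec (PiLp.single 2 j 1))) i

variable {T : Matrix (Fin 2) (Fin 2) ℝ} {l m : ℂ}

theorem fin_two_rows_of_mulVec_eq_smul (h : (T.map Complex.ofReal).mulVec ![1, m] = l • ![1, m]) :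
    T 0 0 + T 0 1 * m = l ∧ T 1 0 + T 1 1 * m = l * m := by
  exact ⟨by simpa [mulVec, dotProduct, Fin.sum_univ_two] using congrFun h 0,
    by simpa [mulVec, dotProduct, Fin.sum_univ_two] using congrFun h 1⟩

theorem apply_zero_one_mul_im_of_mulVec_eq_smul
    (h : (T.map Complex.ofReal).mulVec ![1, m] = l • ![1, m]) : T 0 1 * m.im = l.im := by
  simpa using congrArg Complex.im (fin_two_rows_of_mulVec_eq_smul h).1

theorem apply_one_zero_of_mulVec_eq_smul (hm : m.im ≠ 0)
    (h : (T.map Complex.ofReal).mulVec ![1, m] = l • ![1, m]) :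
    T 1 0 = -(T 0 1 * ‖m‖ ^ 2) := by
  obtain ⟨h0, h1⟩ := fin_two_rows_of_mulVec_eq_smul h
  have hquad : T 1 0 + T 1 1 * m = (T 0 0 + T 0 1 * m) * m := by rw [h0, h1]
  have him := congrArg Complex.im hquad
  have hre := congrArg Complex.re hquad
  simp only [Complex.add_re, Complex.add_im, Complex.mul_re, Complex.mul_im, Complex.ofReal_re,
    Complex.ofReal_im, zero_mul, add_zero, zero_add, sub_zero] at him hre
  have hdiag : T 0 0 - T 1 1 = -(2 * m.re * T 0 1) :=
    mul_left_cancel₀ hm (by linear_combination -him)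
  rw [Complex.sq_norm, Complex.normSq_apply]
  linear_combination hre + m.re * hdiag

end Matrix

/-- If a real `2×2` matrix `T`, viewed as acting on `ℂ²`, satisfies
`T (1, m)ᵀ = e^{-iθ} (1, m)ᵀ` with `Im m > 0`, then
`‖T‖ ≥ (|sin θ|/2) (1 + |m|²) / Im m`, with the Euclidean operator norm. -/
theorem transfer_matrix_norm_lower_bound (T : Matrix (Fin 2) (Fin 2) ℝ) (θ : ℝ) (m : ℂ)
    (hm : 0 < m.im)
    (h : (T.map Complex.ofReal).mulVec ![1, m] = Complex.exp (-(θ * Complex.I)) • ![1, m]) :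
    ‖T‖ ≥ |Real.sin θ| / 2 * (1 + ‖m‖ ^ 2) / m.im := by
  have hexp_im : (Complex.exp (-(θ * Complex.I))).im = -Real.sin θ := by
    rw [← neg_mul, ← Complex.ofReal_neg, Complex.exp_ofReal_mul_I_im, Real.sin_neg]
  have h01 : T 0 1 * m.im = -Real.sin θ := by
    rw [T.apply_zero_one_mul_im_of_mulVec_eq_smul h, hexp_im]
  have h10 : T 1 0 = -(T 0 1 * ‖m‖ ^ 2) := T.apply_one_zero_of_mulVec_eq_smul hm.ne' h
  have hT01 : |T 0 1| = |Real.sin θ| / m.im := by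
    rw [eq_div_iff hm.ne', ← abs_of_pos hm, ← abs_mul, h01, abs_neg]
  have hsum : |Real.sin θ| / 2 * (1 + ‖m‖ ^ 2) / m.im = (|T 0 1| + |T 1 0|) / 2 := by
    rw [h10, abs_neg, abs_mul, abs_of_nonneg (by positivity : (0 : ℝ) ≤ ‖m‖ ^ 2), hT01]
    ring
  have h01_le := T.norm_entry_le_l2_opNorm 0 1
  have h10_le := T.norm_entry_le_l2_opNorm 1 0
  rw [Real.norm_eq_abs] at h01_le h10_le
  rw [ge_iff_le, hsum]
  linarith
end

section
/- Let L ≥ 3, v : {1,…,L} → ℝ, and let H(k) be the associated Floquet matrix. Then for every k ∈ ℝ and every z ∈ ℂ, det( H(k) − z·Id ) = tr T(L,z) − 2 cos(kL), where T(L,z) = A(v(L),z)⋯A(v(1),z) with A(a,z) = [[a−z, −1],[1, 0]] is the (complexified) transfer matrix. -/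
/-- The complexified one-step transfer matrix `A(a,z) = [[a-z,-1],[1,0]]`. -/
noncomputable def transferAC (a : ℝ) (z : ℂ) : Matrix (Fin 2) (Fin 2) ℂ :=
  !![(a : ℂ) - z, -1; 1, 0]

/-- The complexified transfer matrix `T(L,z) = A(v(L),z) ⋯ A(v(1),z)`. -/
noncomputable def transferTC (L : ℕ) (v : Fin L → ℝ) (z : ℂ) : Matrix (Fin 2) (Fin 2) ℂ :=
  ((List.ofFn fun i : Fin L => transferAC (v i) z).reverse).prod

open Matrix

section Jacobi

variable {R : Type*} [CommRing R] {n : ℕ}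

def jacobiMatrix (w : Fin n → R) : Matrix (Fin n) (Fin n) R :=
  of fun i j =>
    if i = j then w i
    else if (i : ℕ) + 1 = j then -1
    else if (j : ℕ) + 1 = i then -1
    else 0

def periodicJacobiMatrix (w : Fin n → R) (α β : R) : Matrix (Fin n) (Fin n) R :=
  of fun i j =>
    if i = j then w i
    else if (i : ℕ) + 1 = j then -1
    else if (j : ℕ) + 1 = i then -1
    else if (i : ℕ) = 0 ∧ (j : ℕ) = n - 1 then α
    else if (i : ℕ) = n - 1 ∧ (j : ℕ) = 0 then β
    else 0

def jacobiTransfer (a : R) : Matrix (Fin 2) (Fin 2) R :=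
  !![a, -1; 1, 0]

def transferMatrix (w : Fin n → R) : Matrix (Fin 2) (Fin 2) R :=
  ((List.ofFn fun i => jacobiTransfer (w i)).reverse).prod

lemma periodicJacobiMatrix_sub_smul_one (w : Fin n → R) (α β z : R) :
    periodicJacobiMatrix w α β - z • (1 : Matrix (Fin n) (Fin n) R) =
      periodicJacobiMatrix (fun i => w i - z) α β := by
  ext i j
  by_cases hij : i = j
  · simp [periodicJacobiMatrix, hij]
  · simp [periodicJacobiMatrix, hij, one_apply_ne hij]

lemma det_succ_column_zero_of_inner_eq_zero (A : Matrix (Fin (n + 2)) (Fin (n + 2)) R)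
    (hA : ∀ i : Fin n, A i.castSucc.succ 0 = 0) :
    A.det = A 0 0 * (A.submatrix Fin.succ Fin.succ).det
      + (-1) ^ (n + 1) * A (Fin.last _) 0 * (A.submatrix Fin.castSucc Fin.succ).det := by
  rw [det_succ_column_zero, Fin.sum_univ_succ, Fin.sum_univ_castSucc]
  simp [hA]

lemma det_jacobiMatrix_succ_succ (w : Fin (n + 2) → R) :
    (jacobiMatrix w).det =
      w 0 * (jacobiMatrix (Fin.tail w)).det - (jacobiMatrix (Fin.tail (Fin.tail w))).det := by
  have hrow : ∀ j : Fin n, jacobiMatrix w 0 j.succ.succ = 0 := fun j => by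
    -- `Fin.val_eq_zero_iff` undoes `Fin.ext_iff` on `_ = 0`, and `simp` would loop
    simp [jacobiMatrix, Fin.ext_iff, -Fin.val_eq_zero_iff]
  have hminor₀ : (jacobiMatrix w).submatrix Fin.succ Fin.succ = jacobiMatrix (Fin.tail w) := by
    ext i j
    simp [jacobiMatrix, Fin.tail]
  have hminor₁ : ((jacobiMatrix w).submatrix Fin.succ (Fin.succAbove 1)).det =
      -(jacobiMatrix (Fin.tail (Fin.tail w))).det := by
    have hcol : ∀ i : Fin n, jacobiMatrix w i.succ.succ 0 = 0 := fun i => by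
      simp [jacobiMatrix]
    have hsub : (jacobiMatrix w).submatrix (fun i => i.succ.succ) (fun j => j.succ.succ)
        = jacobiMatrix (Fin.tail (Fin.tail w)) := by
      ext i j
      simp [jacobiMatrix, Fin.tail]
    have h10 : jacobiMatrix w 1 0 = -1 := by simp [jacobiMatrix]
    rw [det_succ_column_zero, Fin.sum_univ_succ]
    simp [hcol, submatrix_submatrix, Function.comp_def, hsub, h10]
  have h00 : jacobiMatrix w 0 0 = w 0 := by simp [jacobiMatrix]
  have h01 : jacobiMatrix w 0 1 = -1 := by simp [jacobiMatrix]
  rw [det_succ_row_zero, Fin.sum_univ_succ, Fin.sum_univ_succ]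
  simp only [Fin.val_zero, Fin.val_one, pow_zero, pow_one, Fin.succAbove_zero, Fin.succ_zero_eq_one,
    h00, h01, hminor₀, hminor₁, hrow, mul_zero, zero_mul, Finset.sum_const_zero, add_zero]
  ring

lemma det_jacobiMatrix_one (w : Fin 1 → R) : (jacobiMatrix w).det = w 0 := by
  simp [jacobiMatrix]

lemma transferMatrix_succ (w : Fin (n + 1) → R) :
    transferMatrix w = transferMatrix (Fin.tail w) * jacobiTransfer (w 0) := by
  simp [transferMatrix, List.ofFn_succ, Fin.tail]

lemma transferMatrix_eq (w : Fin (n + 2) → R) :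
    transferMatrix w =
      !![(jacobiMatrix w).det, -(jacobiMatrix (Fin.tail w)).det;
        (jacobiMatrix (Fin.init w)).det, -(jacobiMatrix (Fin.tail (Fin.init w))).det] := by
  induction n with
  | zero =>
    rw [transferMatrix_succ, transferMatrix_succ, det_jacobiMatrix_succ_succ,
      det_jacobiMatrix_one, det_jacobiMatrix_one, det_isEmpty, det_isEmpty]
    simp [transferMatrix, jacobiTransfer, Fin.tail, Fin.init, sub_eq_add_neg, mul_comm (w 1)]
  | succ n ih =>
    rw [transferMatrix_succ, ih, jacobiTransfer, mul_fin_two, det_jacobiMatrix_succ_succ w,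
      det_jacobiMatrix_succ_succ (Fin.init w), Fin.tail_init_eq_init_tail,
      Fin.tail_init_eq_init_tail, Fin.tail_init_eq_init_tail]
    ext i j
    fin_cases i <;> fin_cases j <;> simp [Fin.init] <;> ring

lemma trace_transferMatrix (w : Fin (n + 2) → R) :
    (transferMatrix w).trace =
      (jacobiMatrix w).det - (jacobiMatrix (Fin.tail (Fin.init w))).det := by
  rw [transferMatrix_eq, trace_fin_two_of, sub_eq_add_neg]

section Periodic

variable (w : Fin (n + 3) → R) (α β : R)

lemma periodicJacobiMatrix_one_zero : periodicJacobiMatrix w α β 1 0 = -1 := by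
  simp [periodicJacobiMatrix]

lemma periodicJacobiMatrix_last_zero : periodicJacobiMatrix w α β (Fin.last _) 0 = β := by
  simp [periodicJacobiMatrix]

lemma periodicJacobiMatrix_succ_succ_zero (i : Fin n) :
    periodicJacobiMatrix w α β i.castSucc.succ.succ 0 = 0 := by
  simp [periodicJacobiMatrix]
  omega

lemma det_periodicJacobiMatrix_minor_one :
    ((periodicJacobiMatrix w α β).submatrix Fin.succ (Fin.succAbove 1)).det =
      β - (jacobiMatrix (Fin.tail (Fin.tail w))).det := by
  have hinner : (periodicJacobiMatrix w α β).submatrix (fun i => i.succ.succ)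
      (fun j => j.succ.succ) = jacobiMatrix (Fin.tail (Fin.tail w)) := by
    ext i j
    simp [periodicJacobiMatrix, jacobiMatrix, Fin.tail]
  have hlower : ((periodicJacobiMatrix w α β).submatrix (fun i : Fin (n + 1) => i.castSucc.succ)
      (fun j => j.succ.succ)).det = (-1) ^ (n + 1) := by
    rw [det_of_isLowerTriangular]
    · simp [periodicJacobiMatrix, Fin.ext_iff, -Fin.val_eq_zero_iff]
    · intro i j hij
      have : (i : ℕ) < j := hij
      simp only [periodicJacobiMatrix, Fin.ext_iff, Nat.add_one_sub_one, submatrix_apply, of_apply,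
        Fin.val_succ, Fin.val_castSucc, Nat.add_right_cancel_iff, Nat.add_eq_zero_iff, one_ne_zero,
        and_false, false_and, ↓reduceIte, and_self]
      split_ifs <;> first | rfl | omega
  rw [det_succ_column_zero_of_inner_eq_zero _ (periodicJacobiMatrix_succ_succ_zero w α β)]
  simp only [submatrix_apply, submatrix_submatrix, Function.comp_def, Fin.one_succAbove_succ,
    Fin.one_succAbove_zero, Fin.succ_zero_eq_one, Fin.succ_last, hinner, hlower,
    periodicJacobiMatrix_one_zero, periodicJacobiMatrix_last_zero]
  rw [mul_right_comm, ← mul_pow, neg_mul_neg, mul_one, one_pow, one_mul]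
  ring

lemma det_periodicJacobiMatrix_minor_last :
    ((periodicJacobiMatrix w α β).submatrix Fin.succ Fin.castSucc).det =
      (-1) ^ n * (1 - β * (jacobiMatrix (Fin.tail (Fin.init w))).det) := by
  have hinner : (periodicJacobiMatrix w α β).submatrix (fun i => i.castSucc.succ)
      (fun j => j.succ.castSucc) = jacobiMatrix (Fin.tail (Fin.init w)) := by
    ext i j
    simp [periodicJacobiMatrix, jacobiMatrix, Fin.tail,
      Fin.init]
  have hupper : ((periodicJacobiMatrix w α β).submatrix (fun i : Fin (n + 1) => i.succ.succ)
      (fun j => j.succ.castSucc)).det = (-1) ^ (n + 1) := by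
    rw [det_of_isUpperTriangular]
    · simp [periodicJacobiMatrix, Fin.ext_iff, -Fin.val_eq_zero_iff]
    · intro i j hij
      have : (j : ℕ) < i := hij
      simp only [periodicJacobiMatrix, Fin.ext_iff, Nat.add_one_sub_one, Fin.castSucc_succ,
        submatrix_apply, of_apply, Fin.val_succ, Fin.val_castSucc, Nat.add_right_cancel_iff,
        Nat.add_eq_zero_iff, one_ne_zero, and_false, and_self, false_and, ↓reduceIte]
      split_ifs <;> first | rfl | omega
  rw [det_succ_column_zero_of_inner_eq_zero _ (periodicJacobiMatrix_succ_succ_zero w α β)]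
  simp only [submatrix_apply, submatrix_submatrix, Function.comp_def, Fin.castSucc_zero,
    Fin.succ_zero_eq_one, Fin.succ_last, hinner, hupper,
    periodicJacobiMatrix_one_zero, periodicJacobiMatrix_last_zero]
  ring

lemma det_periodicJacobiMatrix :
    (periodicJacobiMatrix w α β).det =
      (jacobiMatrix w).det + α + β - α * β * (jacobiMatrix (Fin.tail (Fin.init w))).det := by
  have hrow : ∀ j : Fin n, periodicJacobiMatrix w α β 0 j.castSucc.succ.succ = 0 := fun j => by
    simp [periodicJacobiMatrix, Fin.ext_iff, -Fin.val_eq_zero_iff]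
    omega
  have hminor : (periodicJacobiMatrix w α β).submatrix Fin.succ Fin.succ =
      jacobiMatrix (Fin.tail w) := by
    ext i j
    simp [periodicJacobiMatrix, jacobiMatrix, Fin.tail]
  have h00 : periodicJacobiMatrix w α β 0 0 = w 0 := by simp [periodicJacobiMatrix]
  have h01 : periodicJacobiMatrix w α β 0 1 = -1 := by
    simp [periodicJacobiMatrix]
  have h0last : periodicJacobiMatrix w α β 0 (Fin.last _) = α := by
    simp [periodicJacobiMatrix]
  rw [det_succ_row_zero, Fin.sum_univ_succ, Fin.sum_univ_succ, Fin.sum_univ_castSucc]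
  simp only [hrow, Fin.succAbove_zero, Fin.succ_zero_eq_one, Fin.succ_last, Fin.succAbove_last,
    hminor, h00, h01, h0last, det_periodicJacobiMatrix_minor_one,
    det_periodicJacobiMatrix_minor_last, det_jacobiMatrix_succ_succ w, mul_zero, zero_mul,
    Finset.sum_const_zero, zero_add, Fin.val_zero, Fin.val_one, Fin.val_last, Nat.succ_eq_add_one]
  have hsign : (-1 : R) ^ (n + 2) * (-1) ^ n = 1 := by
    rw [← pow_add]
    exact Even.neg_one_pow ⟨n + 1, by ring⟩
  linear_combination (α - α * β * (jacobiMatrix (Fin.tail (Fin.init w))).det) * hsign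

end Periodic

end Jacobi

open Complex in
/-- `det(H(k) - z·Id) = tr T(L,z) - 2 cos(kL)`. -/
theorem det_floquet_eq_trace_transfer_sub (L : ℕ) (hL : 3 ≤ L) (v : Fin L → ℝ)
    (k : ℝ) (z : ℂ) :
    (floquetH L v k - z • 1).det =
      (transferTC L v z).trace - 2 * Complex.cos (k * L) := by
  have hprod : -exp (-(I * k * L)) * -exp (I * k * L) = 1 := by
    rw [neg_mul_neg, ← exp_add, neg_add_cancel, exp_zero]
  have hsum : -exp (-(I * k * L)) + -exp (I * k * L) = -(2 * cos (k * L)) := by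
    rw [two_cos]
    ring_nf
  obtain ⟨n, rfl⟩ : ∃ n, L = n + 3 := ⟨L - 3, by omega⟩
  have hH : floquetH (n + 3) v k = periodicJacobiMatrix (fun i => (v i : ℂ))
      (-exp (-(I * k * (n + 3 : ℕ)))) (-exp (I * k * (n + 3 : ℕ))) := rfl
  have hT : transferTC (n + 3) v z = transferMatrix (fun i => (v i : ℂ) - z) := rfl
  rw [hH, periodicJacobiMatrix_sub_smul_one, det_periodicJacobiMatrix, hT, trace_transferMatrix]
  linear_combination
    hsum - (jacobiMatrix (Fin.tail (Fin.init fun i => (v i : ℂ) - z))).det * hprod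
end

section
/- For every positive integer L, every potential v : {1,…,L} → ℝ, and every E ∈ ℝ with |tr T(L,E)| < 2, one has | d/dE tr T(L,E) | ≥ L · √( 1 − (tr T(L,E)/2)² ). (Equivalently, setting θ(L,E) = arccos( tr T(L,E)/2 ) on the interior of the Floquet spectrum, |∂_E θ(L,E)| ≥ L/2.) -/
/-!
Differentiating `T = A(v L) ⋯ A(v 1)` factor by factor gives `d/dE tr T = -∑ i, u i`, where `u i`
is the lower-left entry of the transfer matrix `M i` of the cyclically rotated potential. Since
`A` has second row `(1, 0)` and second column `(-1, 0)`, also `u i = -(M (i+1))₀₁`, so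
`u i * u (i+1) = -bc` for the matrix `M (i+1) = [[a, b], [c, d]]` of determinant `1` and trace
`tr T`, and `-bc = 1 - ad ≥ 1 - (tr T / 2)²`. Inside the spectrum this bound is positive, so all
`u i` have the same sign and AM–GM on cyclically consecutive pairs gives
`∑ i, |u i| ≥ L √(1 - (tr T / 2)²)`.
-/

/-- The one-step transfer matrix `A(a,E) = [[a-E,-1],[1,0]]`. -/
noncomputable def transferA (a E : ℝ) : Matrix (Fin 2) (Fin 2) ℝ := !![a - E, -1; 1, 0]

/-- The transfer matrix `T(L,E) = A(v(L),E) ⋯ A(v(1),E)` (indices `1,…,L` realized as `Fin L`). -/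
noncomputable def transferT (L : ℕ) (v : Fin L → ℝ) (E : ℝ) : Matrix (Fin 2) (Fin 2) ℝ :=
  ((List.ofFn fun i : Fin L => transferA (v i) E).reverse).prod


open Finset

theorem one_sub_sq_half_trace_le_of_det_eq_one {R : Type*} [Field R] [LinearOrder R]
    [IsStrictOrderedRing R] {M : Matrix (Fin 2) (Fin 2) R} (hM : M.det = 1) :
    1 - (M.trace / 2) ^ 2 ≤ -(M 0 1 * M 1 0) := by
  rw [Matrix.det_fin_two] at hM
  rw [Matrix.trace_fin_two]
  nlinarith [sq_nonneg (M 0 0 - M 1 1)]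

theorem sum_range_succ_eq_sum_range_of_eq {M : Type*} [AddCancelCommMonoid M] {f : ℕ → M}
    {n : ℕ} (hf : f n = f 0) : ∑ i ∈ range n, f (i + 1) = ∑ i ∈ range n, f i := by
  have h := (sum_range_succ' f n).symm.trans (sum_range_succ f n)
  rwa [hf, add_left_inj] at h

theorem sum_abs_le_abs_sum_of_mul_succ_pos {x : ℕ → ℝ} {n : ℕ}
    (h : ∀ i < n, 0 < x i * x (i + 1)) : ∑ i ∈ range n, |x i| ≤ |∑ i ∈ range n, x i| := by
  rcases Nat.eq_zero_or_pos n with rfl | hn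
  · simp
  have hsign : ∀ i < n, 0 < x 0 * x i := by
    intro i hi
    induction i with
    | zero => exact mul_self_pos.mpr (left_ne_zero_of_mul (h 0 hn).ne')
    | succ i ih =>
      have h' := mul_pos (ih (by omega)) (h i (by omega))
      rw [show x 0 * x i * (x i * x (i + 1)) = x i ^ 2 * (x 0 * x (i + 1)) by ring] at h'
      exact pos_of_mul_pos_right h' (sq_nonneg _)
  have hx0 : 0 < |x 0| := abs_pos.mpr (left_ne_zero_of_mul (hsign 0 hn).ne')
  refine le_of_mul_le_mul_left ?_ hx0
  calc |x 0| * ∑ i ∈ range n, |x i| = ∑ i ∈ range n, x 0 * x i := by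
        rw [mul_sum]
        refine sum_congr rfl fun i hi => ?_
        rw [← abs_mul, abs_of_pos (hsign i (mem_range.mp hi))]
    _ ≤ |x 0| * |∑ i ∈ range n, x i| := by
        rw [← mul_sum, ← abs_mul]
        exact le_abs_self _

theorem two_mul_sqrt_le_abs_add_abs {a b s : ℝ} (h : s ≤ a * b) : 2 * √s ≤ |a| + |b| :=
  calc 2 * √s ≤ 2 * (√|a| * √|b|) := by
        rw [← Real.sqrt_mul (abs_nonneg a), ← abs_mul]
        gcongr
        exact h.trans (le_abs_self _)
    _ ≤ |a| + |b| := by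
        nlinarith [two_mul_le_add_sq (√|a|) (√|b|), Real.sq_sqrt (abs_nonneg a),
          Real.sq_sqrt (abs_nonneg b)]

theorem natCast_mul_sqrt_le_abs_sum {x : ℕ → ℝ} {n : ℕ} {s : ℝ} (hs : 0 < s)
    (hcyc : x n = x 0) (h : ∀ i < n, s ≤ x i * x (i + 1)) :
    n * √s ≤ |∑ i ∈ range n, x i| := by
  refine le_trans ?_ (sum_abs_le_abs_sum_of_mul_succ_pos fun i hi => hs.trans_le (h i hi))
  have hpair : ∑ i ∈ range n, 2 * √s ≤ ∑ i ∈ range n, (|x i| + |x (i + 1)|) :=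
    sum_le_sum fun i hi => two_mul_sqrt_le_abs_add_abs (h i (mem_range.mp hi))
  rw [sum_add_distrib, sum_range_succ_eq_sum_range_of_eq (f := fun i => |x i|) (by simp [hcyc]),
    sum_const, card_range, nsmul_eq_mul] at hpair
  linarith

theorem det_transferA (a E : ℝ) : (transferA a E).det = 1 := by
  simp [transferA, Matrix.det_fin_two_of]

noncomputable def transferProd (as : List ℝ) (E : ℝ) : Matrix (Fin 2) (Fin 2) ℝ :=
  (as.map (transferA · E)).prod

section TransferProd

variable (E : ℝ)

@[simp]
theorem transferProd_nil : transferProd [] E = 1 := rfl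

@[simp]
theorem transferProd_cons (a : ℝ) (as : List ℝ) :
    transferProd (a :: as) E = transferA a E * transferProd as E := by
  simp [transferProd]

@[simp]
theorem transferProd_append (as bs : List ℝ) :
    transferProd (as ++ bs) E = transferProd as E * transferProd bs E := by
  simp [transferProd]

theorem transferT_eq_transferProd (L : ℕ) (v : Fin L → ℝ) :
    transferT L v E = transferProd (List.ofFn v).reverse E := by
  rw [transferT, transferProd, List.map_reverse, List.map_ofFn]
  rfl

theorem det_transferProd (as : List ℝ) : (transferProd as E).det = 1 := by
  induction as with
  | nil => simp
  | cons a as ih => rw [transferProd_cons, Matrix.det_mul, det_transferA, ih, one_mul]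

theorem trace_transferProd_rotate (as : List ℝ) (n : ℕ) :
    (transferProd (as.rotate n) E).trace = (transferProd as E).trace := by
  rw [List.rotate_eq_drop_append_take_mod, transferProd_append, Matrix.trace_mul_comm,
    ← transferProd_append, List.take_append_drop]

/-- Writing `as.rotate n = a :: bs`, both sides are the `(0,0)` entry of `transferProd bs E`. -/
theorem transferProd_rotate_succ_zero_one (as : List ℝ) (n : ℕ) :
    transferProd (as.rotate (n + 1)) E 0 1 = -transferProd (as.rotate n) E 1 0 := by
  rw [← List.rotate_rotate]
  rcases as.rotate n with _ | ⟨a, bs⟩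
  · simp
  · simp [transferA, Matrix.mul_apply, Fin.sum_univ_two]

theorem trace_transferProd_take_mul_mul_drop (as : List ℝ) {i : ℕ} (hi : i < as.length) :
    (transferProd (as.take i) E * !![-1, 0; 0, 0] * transferProd (as.drop (i + 1)) E).trace =
      -transferProd (as.rotate i) E 1 0 := by
  rw [List.rotate_eq_drop_append_take hi.le, List.drop_eq_getElem_cons hi, List.cons_append,
    transferProd_cons, transferProd_append, Matrix.trace_mul_cycle]
  simp [transferA, Matrix.trace_fin_two, Matrix.mul_apply, Fin.sum_univ_two]

end TransferProd

section Derivative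

-- Any norm on the finite-dimensional space of matrices gives the same derivatives.
attribute [local instance] Matrix.linftyOpNormedRing Matrix.linftyOpNormedAlgebra

theorem hasDerivAt_transferA (a E : ℝ) : HasDerivAt (transferA a) !![-1, 0; 0, 0] E := by
  have hA : transferA a = fun x : ℝ => !![a, -1; 1, 0] + x • !![-1, 0; 0, 0] := by
    funext x
    ext i j
    fin_cases i <;> fin_cases j <;> simp [transferA, sub_eq_add_neg]
  rw [hA]
  have h := ((hasDerivAt_id E).smul_const !![(-1 : ℝ), 0; 0, 0]).const_add !![a, -1; 1, 0]
  rwa [one_smul] at h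

theorem hasDerivAt_transferProd (as : List ℝ) (E : ℝ) :
    HasDerivAt (transferProd as)
      (∑ i : Fin as.length, transferProd (as.take i) E * !![-1, 0; 0, 0] *
        transferProd (as.drop (i + 1)) E) E := by
  have h := HasFDerivAt.list_prod' (l := as) (x := E)
    (f' := fun _ => ContinuousLinearMap.toSpanSingleton ℝ !![-1, 0; 0, 0])
    (fun a _ => (hasDerivAt_transferA a E).hasFDerivAt)
  refine h.hasDerivAt.congr_deriv ?_
  simp only [_root_.sum_apply, smul_apply, ContinuousLinearMap.toSpanSingleton_apply, one_smul,
    op_smul_eq_mul, smul_eq_mul, mul_assoc, transferProd, Nat.succ_eq_add_one, List.map_take,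
    List.map_drop]

theorem hasDerivAt_trace_transferProd (as : List ℝ) (E : ℝ) :
    HasDerivAt (fun x => (transferProd as x).trace)
      (-∑ i ∈ range as.length, transferProd (as.rotate i) E 1 0) E := by
  have h := (Matrix.traceLinearMap (Fin 2) ℝ ℝ).toContinuousLinearMap.hasFDerivAt.comp_hasDerivAt E
    (hasDerivAt_transferProd as E)
  refine h.congr_deriv ?_
  change Matrix.trace (∑ i : Fin as.length, (_ : Matrix (Fin 2) (Fin 2) ℝ)) = _
  rw [Matrix.trace_sum, ← Fin.sum_univ_eq_sum_range, ← sum_neg_distrib]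
  exact sum_congr rfl fun i _ => trace_transferProd_take_mul_mul_drop E as i.isLt

end Derivative

theorem abs_deriv_trace_transfer_ge_general (L : ℕ) (v : Fin L → ℝ)
    (E : ℝ) (hE : |(transferT L v E).trace| < 2) :
    |deriv (fun x : ℝ => (transferT L v x).trace) E| ≥
      (L : ℝ) * Real.sqrt (1 - ((transferT L v E).trace / 2) ^ 2) := by
  set as := (List.ofFn v).reverse
  have hlen : as.length = L := by simp [as]
  set u : ℕ → ℝ := fun i => transferProd (as.rotate i) E 1 0
  have hderiv : deriv (fun x : ℝ => (transferT L v x).trace) E = -∑ i ∈ range L, u i := by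
    simp_rw [transferT_eq_transferProd]
    rw [(hasDerivAt_trace_transferProd as E).deriv, hlen]
  have hpair : ∀ i, 1 - ((transferT L v E).trace / 2) ^ 2 ≤ u i * u (i + 1) := fun i => by
    have h := one_sub_sq_half_trace_le_of_det_eq_one (det_transferProd E (as.rotate (i + 1)))
    rw [trace_transferProd_rotate, transferProd_rotate_succ_zero_one,
      ← transferT_eq_transferProd] at h
    linarith
  have hs : 0 < 1 - ((transferT L v E).trace / 2) ^ 2 := by nlinarith [abs_lt.mp hE]
  have hcyc : u L = u 0 := by simp [u, ← hlen, List.rotate_length]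
  rw [hderiv, abs_neg, ge_iff_le]
  exact natCast_mul_sqrt_le_abs_sum hs hcyc fun i _ => hpair i

/-- On the interior of the Floquet spectrum, `|d/dE tr T(L,E)| ≥ L √(1 - (tr T(L,E)/2)²)`. -/
theorem abs_deriv_trace_transfer_ge (L : ℕ) (hL : 0 < L) (v : Fin L → ℝ)
    (E : ℝ) (hE : |(transferT L v E).trace| < 2) :
    |deriv (fun x : ℝ => (transferT L v x).trace) E| ≥
      (L : ℝ) * Real.sqrt (1 - ((transferT L v E).trace / 2) ^ 2) :=
  abs_deriv_trace_transfer_ge_general L v E hE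
end
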